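/- arXiv:1912.00341 — 3 statements merged into one kernel-verified Lean document; each statement's English description precedes it below -/
import Mathlib

section
/- Let Δ be an irreducible root system, α a simple root, W_α the subgroup of the Weyl group generated by all simple reflections s_β with β ≠ α, and w_{α,0} the longest element of W_α. Then q_α = 1 + ht(w_{α,0}(α^∨)), where ht denotes the height of a coroot in the dual root system and q_α is defined by |R_α| = q_α ϖ_α. -/
open scoped RealInnerProductSpace
open scoped Classical

/-- An (irreducible, reduced, crystallographic) root system in a real inner product
space `V`, together with a choice of base (simple roots), coordinate functions with
respect to the base, and fundamental weights. -/
structure RootSystemData (V : Type*) [NormedAddCommGroup V] [InnerProductSpace ℝ V] where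
  Δ : Finset V
  base : Finset V
  base_sub : base ⊆ Δ
  root_ne_zero : ∀ γ ∈ Δ, γ ≠ 0
  span_eq_top : Submodule.span ℝ (Δ : Set V) = ⊤
  reflect_mem : ∀ γ ∈ Δ, ∀ δ ∈ Δ, δ - (2 * ⟪δ, γ⟫ / ⟪γ, γ⟫) • γ ∈ Δ
  crystallographic : ∀ γ ∈ Δ, ∀ δ ∈ Δ, ∃ k : ℤ, 2 * ⟪δ, γ⟫ / ⟪γ, γ⟫ = (k : ℝ)
  reduced : ∀ γ ∈ Δ, (2 : ℝ) • γ ∉ Δ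
  coord : V → V → ℝ
  coord_add : ∀ α x y, coord (x + y) α = coord x α + coord y α
  coord_smul : ∀ α (c : ℝ) (x : V), coord (c • x) α = c * coord x α
  coord_base : ∀ α ∈ base, ∀ β ∈ base, coord β α = if β = α then 1 else 0
  root_decomp : ∀ γ ∈ Δ, γ = ∑ α ∈ base, coord γ α • α
  pos_or_neg : ∀ γ ∈ Δ, (∀ α ∈ base, 0 ≤ coord γ α) ∨ (∀ α ∈ base, coord γ α ≤ 0)
  coord_int : ∀ γ ∈ Δ, ∀ α ∈ base, ∃ k : ℤ, coord γ α = (k : ℝ)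
  irreducible : ∀ S ⊆ Δ, S.Nonempty →
    (∀ γ ∈ S, ∀ δ ∈ Δ, δ ∉ S → ⟪γ, δ⟫ = 0) → S = Δ
  fw : V → V
  fw_spec : ∀ α ∈ base, ∀ β ∈ base, ⟪fw α, β⟫ = if β = α then ⟪α, α⟫ / 2 else 0

namespace RootSystemData

variable {V : Type*} [NormedAddCommGroup V] [InnerProductSpace ℝ V]

/-- The set of positive roots (nonnegative coordinates w.r.t. the base). -/
noncomputable def posRoots (R : RootSystemData V) : Finset V :=
  R.Δ.filter fun γ => ∀ α ∈ R.base, 0 ≤ R.coord γ α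

/-- The height of a root: the sum of its coordinates in the base. -/
noncomputable def ht (R : RootSystemData V) (γ : V) : ℝ :=
  ∑ α ∈ R.base, R.coord γ α

/-- The height of the coroot `γ^∨` in the dual root system. -/
noncomputable def dualHt (R : RootSystemData V) (γ : V) : ℝ :=
  ∑ α ∈ R.base, R.coord γ α * ⟪α, α⟫ / ⟪γ, γ⟫

/-- `R_α`: the set of roots having positive inner product with the fundamental
weight `ϖ_α`. -/
noncomputable def Rset (R : RootSystemData V) (α : V) : Finset V :=
  R.Δ.filter fun γ => 0 < ⟪γ, R.fw α⟫

/-- `Δ_α(i)`: the set of roots whose coefficient of `α` equals `i`. -/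
noncomputable def level (R : RootSystemData V) (α : V) (i : ℤ) : Finset V :=
  R.Δ.filter fun γ => R.coord γ α = (i : ℝ)

end RootSystemData

/-!
Write `2ρ` for the sum of the positive roots. Each simple reflection `s_β` permutes the positive
roots other than `β` and negates `β`, so `⟪2ρ, β⟫ = ⟪β, β⟫`; expanding a root `γ` in the base
gives `ht(γ^∨) = ⟪2ρ, γ⟫ / ⟪γ, γ⟫`. Splitting the positive roots according to their
`α`-coordinate, `2ρ = q_α ϖ_α + τ`, where `τ` is the sum of the positive roots of `Δ_α(0)`.
The longest element `w` of `W_α` fixes `ϖ_α` and `γ ↦ -w γ` permutes the positive roots of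
`Δ_α(0)`, so `w τ = -τ` and `2ρ + w (2ρ) = 2 q_α ϖ_α`. Pairing with `α` gives
`⟪α, α⟫ + ⟪2ρ, w α⟫ = q_α ⟪α, α⟫`, that is `1 + ht((w α)^∨) = q_α`.
-/

theorem Submodule.reflection_orthogonalComplement_singleton_apply
    {F : Type*} [NormedAddCommGroup F] [InnerProductSpace ℝ F] (β x : F) :
    (ℝ ∙ β)ᗮ.reflection x = x - (2 * ⟪x, β⟫ / ⟪β, β⟫) • β := by
  rw [reflection_orthogonal_apply, reflection_singleton_apply, real_inner_self_eq_norm_sq,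
    real_inner_comm]
  simp only [RCLike.ofReal_real_eq_id, id_eq]
  module

namespace RootSystemData

variable {V : Type*} [NormedAddCommGroup V] [InnerProductSpace ℝ V] (R : RootSystemData V)

theorem inner_self_pos_of_mem {γ : V} (hγ : γ ∈ R.Δ) : 0 < ⟪γ, γ⟫ :=
  real_inner_self_pos.2 (R.root_ne_zero γ hγ)

theorem reflection_mem {β γ : V} (hβ : β ∈ R.Δ) (hγ : γ ∈ R.Δ) :
    (ℝ ∙ β)ᗮ.reflection γ ∈ R.Δ := by
  rw [Submodule.reflection_orthogonalComplement_singleton_apply]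
  exact R.reflect_mem β hβ γ hγ

theorem neg_mem {γ : V} (hγ : γ ∈ R.Δ) : -γ ∈ R.Δ := by
  simpa only [Submodule.reflection_orthogonalComplement_singleton_eq_neg] using
    R.reflection_mem hγ hγ

theorem coord_neg (x β : V) : R.coord (-x) β = -R.coord x β := by
  simpa using R.coord_smul β (-1) x

theorem coord_sub (x y β : V) : R.coord (x - y) β = R.coord x β - R.coord y β := by
  rw [sub_eq_add_neg, R.coord_add, R.coord_neg, sub_eq_add_neg]

theorem coord_self {β : V} (hβ : β ∈ R.base) : R.coord β β = 1 := by
  simp [R.coord_base β hβ β hβ]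

theorem coord_of_ne {β δ : V} (hβ : β ∈ R.base) (hδ : δ ∈ R.base) (h : δ ≠ β) :
    R.coord δ β = 0 := by
  simp [R.coord_base β hβ δ hδ, h]

theorem coord_reflection_of_ne {β δ : V} (hβ : β ∈ R.base) (hδ : δ ∈ R.base) (h : δ ≠ β)
    (x : V) : R.coord ((ℝ ∙ β)ᗮ.reflection x) δ = R.coord x δ := by
  rw [Submodule.reflection_orthogonalComplement_singleton_apply, R.coord_sub, R.coord_smul,
    R.coord_of_ne hδ hβ h.symm, mul_zero, sub_zero]

theorem mem_posRoots_iff {γ : V} :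
    γ ∈ R.posRoots ↔ γ ∈ R.Δ ∧ ∀ β ∈ R.base, 0 ≤ R.coord γ β :=
  Finset.mem_filter

theorem mem_posRoots_of_coord_pos {γ β : V} (hγ : γ ∈ R.Δ) (hβ : β ∈ R.base)
    (h : 0 < R.coord γ β) : γ ∈ R.posRoots :=
  R.mem_posRoots_iff.2 ⟨hγ, (R.pos_or_neg γ hγ).resolve_right fun hneg => (hneg β hβ).not_gt h⟩

theorem mem_posRoots_of_mem_base {β : V} (hβ : β ∈ R.base) : β ∈ R.posRoots :=
  R.mem_posRoots_of_coord_pos (R.base_sub hβ) hβ (R.coord_self hβ ▸ one_pos)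

/-- The crystallographic condition leaves only the multiple `2`, which reducedness excludes. -/
theorem eq_one_of_intCast_smul_mem {β : V} (hβ : β ∈ R.Δ) {k : ℤ} (hk : 0 < k)
    (h : (k : ℝ) • β ∈ R.Δ) : k = 1 := by
  obtain ⟨m, hm⟩ := R.crystallographic _ h β hβ
  have hββ := (R.inner_self_pos_of_mem hβ).ne'
  have hk' : (k : ℝ) ≠ 0 := by exact_mod_cast hk.ne'
  rw [real_inner_smul_right, real_inner_smul_left, real_inner_smul_right] at hm
  have hmk : m * k = 2 := by
    have : (m : ℝ) * k = 2 := by rw [← hm]; field_simp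
    exact_mod_cast this
  have hk2 : k ≤ 2 := Int.le_of_dvd two_pos ⟨m, by rw [← hmk, mul_comm]⟩
  have hne2 : k ≠ 2 := by
    rintro rfl
    exact R.reduced β hβ (by exact_mod_cast h)
  omega

theorem exists_coord_pos_of_ne {β γ : V} (hβ : β ∈ R.base) (hγ : γ ∈ R.posRoots)
    (hne : γ ≠ β) : ∃ δ ∈ R.base, δ ≠ β ∧ 0 < R.coord γ δ := by
  obtain ⟨hγΔ, hγpos⟩ := R.mem_posRoots_iff.1 hγ
  by_contra! hcon
  have hγ_eq : γ = R.coord γ β • β := by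
    conv_lhs => rw [R.root_decomp γ hγΔ]
    refine Finset.sum_eq_single_of_mem β hβ fun δ hδ hδβ => ?_
    rw [le_antisymm (hcon δ hδ hδβ) (hγpos δ hδ), zero_smul]
  obtain ⟨k, hk⟩ := R.coord_int γ hγΔ β hβ
  rw [hk] at hγ_eq
  have hk_nonneg : (0 : ℝ) ≤ k := hk ▸ hγpos β hβ
  have hk0 : 0 < k := by
    refine lt_of_le_of_ne (by exact_mod_cast hk_nonneg) fun hk0 => R.root_ne_zero γ hγΔ ?_
    rw [hγ_eq, ← hk0, Int.cast_zero, zero_smul]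
  have hk1 := R.eq_one_of_intCast_smul_mem (R.base_sub hβ) hk0 (hγ_eq ▸ hγΔ)
  exact hne (by simpa [hk1] using hγ_eq)

theorem reflection_mem_posRoots_erase {β γ : V} (hβ : β ∈ R.base)
    (hγ : γ ∈ R.posRoots.erase β) : (ℝ ∙ β)ᗮ.reflection γ ∈ R.posRoots.erase β := by
  obtain ⟨hne, hγP⟩ := Finset.mem_erase.1 hγ
  obtain ⟨δ, hδ, hδβ, hδpos⟩ := R.exists_coord_pos_of_ne hβ hγP hne
  rw [← R.coord_reflection_of_ne hβ hδ hδβ] at hδpos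
  refine Finset.mem_erase.2 ⟨fun h => ?_, R.mem_posRoots_of_coord_pos
    (R.reflection_mem (R.base_sub hβ) (R.mem_posRoots_iff.1 hγP).1) hδ hδpos⟩
  rw [h, R.coord_of_ne hδ hβ hδβ.symm] at hδpos
  exact hδpos.false

theorem inner_sum_posRoots_of_mem_base {β : V} (hβ : β ∈ R.base) :
    ⟪∑ γ ∈ R.posRoots, γ, β⟫ = ⟪β, β⟫ := by
  set s := (ℝ ∙ β)ᗮ.reflection
  have hperm : ∑ γ ∈ R.posRoots.erase β, s γ = ∑ γ ∈ R.posRoots.erase β, γ :=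
    Finset.sum_nbij' s s (fun _ => R.reflection_mem_posRoots_erase hβ)
      (fun _ => R.reflection_mem_posRoots_erase hβ) (fun _ _ => (ℝ ∙ β)ᗮ.reflection_reflection _)
      (fun _ _ => (ℝ ∙ β)ᗮ.reflection_reflection _) fun _ _ => rfl
  have hsβ : s β = -β := Submodule.reflection_orthogonalComplement_singleton_eq_neg β
  have hs : s (∑ γ ∈ R.posRoots, γ) = ∑ γ ∈ R.posRoots, γ - (2 : ℝ) • β := by
    rw [map_sum, ← Finset.add_sum_erase _ _ (R.mem_posRoots_of_mem_base hβ), hperm, hsβ,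
      ← Finset.add_sum_erase _ (fun γ => γ) (R.mem_posRoots_of_mem_base hβ), two_smul]
    abel
  rw [Submodule.reflection_orthogonalComplement_singleton_apply, sub_right_inj] at hs
  have hββ := (R.inner_self_pos_of_mem (R.base_sub hβ)).ne'
  have hcoef := smul_left_injective ℝ (R.root_ne_zero β (R.base_sub hβ)) hs
  field_simp at hcoef
  linarith

theorem dualHt_eq_inner_sum_posRoots {γ : V} (hγ : γ ∈ R.Δ) :
    R.dualHt γ = ⟪∑ δ ∈ R.posRoots, δ, γ⟫ / ⟪γ, γ⟫ := by
  rw [dualHt, ← Finset.sum_div]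
  congr 1
  conv_rhs => rw [R.root_decomp γ hγ]
  rw [inner_sum]
  refine Finset.sum_congr rfl fun β hβ => ?_
  rw [real_inner_smul_right, R.inner_sum_posRoots_of_mem_base hβ]

theorem inner_fw {γ β : V} (hγ : γ ∈ R.Δ) (hβ : β ∈ R.base) :
    ⟪γ, R.fw β⟫ = R.coord γ β * (⟪β, β⟫ / 2) := by
  conv_lhs => rw [R.root_decomp γ hγ]
  rw [sum_inner, Finset.sum_eq_single_of_mem β hβ fun δ hδ hδβ => ?_]
  · rw [real_inner_smul_left, real_inner_comm, R.fw_spec β hβ β hβ, if_pos rfl]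
  · rw [real_inner_smul_left, real_inner_comm, R.fw_spec β hβ δ hδ, if_neg hδβ, mul_zero]

theorem mem_Rset_iff {α γ : V} (hα : α ∈ R.base) :
    γ ∈ R.Rset α ↔ γ ∈ R.Δ ∧ 0 < R.coord γ α := by
  have hαα : 0 < ⟪α, α⟫ / 2 := half_pos (R.inner_self_pos_of_mem (R.base_sub hα))
  refine Finset.mem_filter.trans (and_congr_right fun hγ => ?_)
  rw [R.inner_fw hγ hα]
  exact mul_pos_iff_of_pos_right hαα

theorem sum_posRoots_eq_sum_Rset_add {α : V} (hα : α ∈ R.base) :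
    ∑ γ ∈ R.posRoots, γ =
      ∑ γ ∈ R.Rset α, γ + ∑ γ ∈ R.posRoots with R.coord γ α = 0, γ := by
  rw [← Finset.sum_filter_add_sum_filter_not R.posRoots (fun γ => 0 < R.coord γ α)]
  congr 2
  · ext γ
    rw [Finset.mem_filter, R.mem_Rset_iff hα]
    exact ⟨fun h => ⟨(R.mem_posRoots_iff.1 h.1).1, h.2⟩,
      fun h => ⟨R.mem_posRoots_of_coord_pos h.1 hα h.2, h.2⟩⟩
  · refine Finset.filter_congr fun γ hγ => ?_
    have := (R.mem_posRoots_iff.1 hγ).2 α hα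
    rw [not_lt]
    exact ⟨fun h => le_antisymm h this, fun h => h.le⟩

theorem coord_map_of_map_fw_eq {α : V} (hα : α ∈ R.base) {w : V ≃ₗᵢ[ℝ] V}
    (hwΔ : ∀ γ ∈ R.Δ, w γ ∈ R.Δ) (hwfw : w (R.fw α) = R.fw α) {γ : V} (hγ : γ ∈ R.Δ) :
    R.coord (w γ) α = R.coord γ α := by
  have h := w.inner_map_map γ (R.fw α)
  rw [hwfw, R.inner_fw (hwΔ γ hγ) hα, R.inner_fw hγ hα] at h
  exact mul_right_cancel₀ (half_pos (R.inner_self_pos_of_mem (R.base_sub hα))).ne' h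

theorem map_sum_posRoots_coord_eq_zero {α : V} (hα : α ∈ R.base) {w : V ≃ₗᵢ[ℝ] V}
    (hwΔ : ∀ γ ∈ R.Δ, w γ ∈ R.Δ) (hw2 : ∀ v : V, w (w v) = v) (hwfw : w (R.fw α) = R.fw α)
    (hwlong : ∀ γ ∈ R.posRoots, R.coord γ α = 0 → ∀ β ∈ R.base, R.coord (w γ) β ≤ 0) :
    w (∑ γ ∈ R.posRoots with R.coord γ α = 0, γ) =
      -∑ γ ∈ R.posRoots with R.coord γ α = 0, γ := by
  have hmaps : ∀ γ ∈ R.posRoots.filter (R.coord · α = 0),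
      -w γ ∈ R.posRoots.filter (R.coord · α = 0) := by
    intro γ hγ
    obtain ⟨hγP, hγ0⟩ := Finset.mem_filter.1 hγ
    have hγΔ := (R.mem_posRoots_iff.1 hγP).1
    refine Finset.mem_filter.2 ⟨R.mem_posRoots_iff.2 ⟨R.neg_mem (hwΔ γ hγΔ), fun β hβ => ?_⟩, ?_⟩
    · rw [R.coord_neg]
      linarith [hwlong γ hγP hγ0 β hβ]
    · rw [R.coord_neg, R.coord_map_of_map_fw_eq hα hwΔ hwfw hγΔ, hγ0, neg_zero]
  rw [map_sum, ← Finset.sum_neg_distrib]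
  exact Finset.sum_nbij' (fun γ => -w γ) (fun γ => -w γ) hmaps hmaps (fun γ _ => by simp [hw2])
    (fun γ _ => by simp [hw2]) fun γ _ => by simp

end RootSystemData

/-- `w` models the longest element `w_{α,0}` of `W_α`. -/
theorem q_eq_one_add_dualHt_w_alpha_general
    {V : Type*} [NormedAddCommGroup V] [InnerProductSpace ℝ V]
    (R : RootSystemData V) (α : V) (hα : α ∈ R.base)
    (w : V ≃ₗᵢ[ℝ] V)
    (hwΔ : ∀ γ ∈ R.Δ, w γ ∈ R.Δ)
    (hw2 : ∀ v : V, w (w v) = v)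
    (hwfw : w (R.fw α) = R.fw α)
    (hwlong : ∀ γ ∈ R.posRoots, R.coord γ α = 0 → ∀ β ∈ R.base, R.coord (w γ) β ≤ 0)
    (q : ℕ) (hq : (∑ γ ∈ R.Rset α, γ) = (q : ℝ) • R.fw α) :
    (q : ℝ) = 1 + R.dualHt (w α) := by
  have hαΔ := R.base_sub hα
  set τ := ∑ γ ∈ R.posRoots with R.coord γ α = 0, γ
  have hρ : ∑ γ ∈ R.posRoots, γ = (q : ℝ) • R.fw α + τ := by
    rw [R.sum_posRoots_eq_sum_Rset_add hα, hq]
  have hwρ : w (∑ γ ∈ R.posRoots, γ) = (q : ℝ) • R.fw α - τ := by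
    rw [hρ, map_add, map_smul, hwfw, R.map_sum_posRoots_coord_eq_zero hα hwΔ hw2 hwfw hwlong,
      sub_eq_add_neg]
  have hpair : ⟪α, α⟫ + ⟪∑ γ ∈ R.posRoots, γ, w α⟫ = q * ⟪α, α⟫ := calc
    _ = ⟪∑ γ ∈ R.posRoots, γ + w (∑ γ ∈ R.posRoots, γ), α⟫ := by
      rw [inner_add_left, R.inner_sum_posRoots_of_mem_base hα, ← w.inner_map_map _ (w α), hw2]
    _ = ⟪(2 * q : ℝ) • R.fw α, α⟫ := by
      rw [hwρ, hρ, two_mul, add_smul]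
      congr 1
      abel
    _ = q * ⟪α, α⟫ := by
      rw [real_inner_smul_left, R.fw_spec α hα α hα, if_pos rfl]; ring
  have hαα := (R.inner_self_pos_of_mem hαΔ).ne'
  rw [R.dualHt_eq_inner_sum_posRoots (hwΔ α hαΔ), w.inner_map_map]
  field_simp
  linarith

/-- If `w` is the longest element of the parabolic subgroup `W_α`
(characterized here by: it is an involutive isometry preserving the root system,
fixing `ϖ_α`, preserving `R_α` and mapping the positive roots with `α`-coordinate `0`
to negative roots), then `q_α = 1 + ht(w(α)^∨)`. -/
theorem q_eq_one_add_dualHt_w_alpha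
    {V : Type*} [NormedAddCommGroup V] [InnerProductSpace ℝ V]
    (R : RootSystemData V) (α : V) (hα : α ∈ R.base)
    (w : V ≃ₗᵢ[ℝ] V)
    (hwΔ : ∀ γ ∈ R.Δ, w γ ∈ R.Δ)
    (hw2 : ∀ v : V, w (w v) = v)
    (hwfw : w (R.fw α) = R.fw α)
    (hwR : ∀ γ ∈ R.Rset α, w γ ∈ R.Rset α)
    (hwlong : ∀ γ ∈ R.posRoots, R.coord γ α = 0 → ∀ β ∈ R.base, R.coord (w γ) β ≤ 0)
    (q : ℕ) (hq : (∑ γ ∈ R.Rset α, γ) = (q : ℝ) • R.fw α) :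
    (q : ℝ) = 1 + R.dualHt (w α) :=
  q_eq_one_add_dualHt_w_alpha_general R α hα w hwΔ hw2 hwfw hwlong q hq
end

section
/- Let g be a simple Lie algebra with the (Z, α)-grading g = ⊕_i g_α(i) associated with a simple root α, let d = d_α be the height of the grading, q_α(i) the positive rational numbers with |Δ_α(i)| = q_α(i) ϖ_α, and q_α = Σ_{i≥1} q_α(i). Then for the Casimir eigenvalues one has the relation d·(q_α + q_α(d)) = 2 h* r_α, where r_α = (θ,θ)/(α,α) and h* is the dual Coxeter number. In particular, d divides 2 h* r_α. -/
open scoped RealInnerProductSpace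
open scoped Classical

section Aux

variable {V : Type*} [NormedAddCommGroup V] [InnerProductSpace ℝ V]
variable (R : RootSystemData V)

lemma aux_ipos {γ : V} (h : γ ∈ R.Δ) : (0:ℝ) < ⟪γ, γ⟫ :=
  lt_of_le_of_ne real_inner_self_nonneg
    (Ne.symm (inner_self_ne_zero.mpr (R.root_ne_zero γ h)))

lemma aux_neg_mem {γ : V} (h : γ ∈ R.Δ) : -γ ∈ R.Δ := by
  have h2 := R.reflect_mem γ h γ h
  have hne : ⟪γ, γ⟫ ≠ (0:ℝ) := ne_of_gt (aux_ipos R h)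
  rw [mul_div_assoc, div_self hne, mul_one] at h2
  have : γ - (2:ℝ) • γ = -γ := by module
  rwa [this] at h2

lemma aux_coord_sub (β : V) (x y : V) :
    R.coord (x - y) β = R.coord x β - R.coord y β := by
  have : x - y = x + (-1:ℝ) • y := by module
  rw [this, R.coord_add, R.coord_smul]; ring

lemma aux_inner_decomp {γ : V} (h : γ ∈ R.Δ) (x : V) :
    ⟪γ, x⟫ = ∑ β ∈ R.base, R.coord γ β * ⟪β, x⟫ := by
  conv_lhs => rw [R.root_decomp γ h]
  rw [sum_inner]
  simp [real_inner_smul_left]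

lemma aux_coord_eq_zero {γ : V} (h : γ ∈ R.Δ)
    (h0 : ∀ β ∈ R.base, R.coord γ β = 0) : False := by
  have := R.root_decomp γ h
  rw [Finset.sum_congr rfl (fun β hβ => by rw [h0 β hβ, zero_smul])] at this
  rw [Finset.sum_const_zero] at this
  exact R.root_ne_zero γ h this

end Aux

section Aux2

variable {V : Type*} [NormedAddCommGroup V] [InnerProductSpace ℝ V]
variable (R : RootSystemData V)

lemma aux_mem_pos {γ : V} (h : γ ∈ R.Δ) {β' : V} (hβ' : β' ∈ R.base)
    (hc : 0 < R.coord γ β') : γ ∈ R.posRoots := by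
  rcases R.pos_or_neg γ h with hp | hn
  · exact Finset.mem_filter.mpr ⟨h, hp⟩
  · exact absurd (hn β' hβ') (not_le.mpr hc)

lemma aux_dominant {θ : V} (hθ : θ ∈ R.Δ)
    (hθmax : ∀ γ ∈ R.Δ, ∀ β ∈ R.base, R.coord γ β ≤ R.coord θ β)
    {β : V} (hβ : β ∈ R.base) : 0 ≤ ⟪θ, β⟫ := by
  by_contra hneg
  push_neg at hneg
  have hβΔ := R.base_sub hβ
  obtain ⟨k, hk⟩ := R.crystallographic β hβΔ θ hθ
  have hββ := aux_ipos R hβΔ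
  have hkneg : (k:ℝ) < 0 := by
    rw [← hk]; exact div_neg_of_neg_of_pos (by linarith) hββ
  have hmem := R.reflect_mem β hβΔ θ hθ
  rw [hk] at hmem
  have hle := hθmax _ hmem β hβ
  rw [aux_coord_sub, R.coord_smul, R.coord_base β hβ β hβ, if_pos rfl] at hle
  linarith

lemma aux_fw_inner {α : V} (hα : α ∈ R.base) {γ : V} (hγ : γ ∈ R.Δ) :
    ⟪γ, R.fw α⟫ = R.coord γ α * (⟪α, α⟫ / 2) := by
  rw [aux_inner_decomp R hγ]
  rw [Finset.sum_eq_single α]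
  · rw [real_inner_comm, R.fw_spec α hα α hα, if_pos rfl]
  · intro b hb hne
    rw [real_inner_comm, R.fw_spec α hα b hb, if_neg hne, mul_zero]
  · intro h; exact absurd hα h

lemma aux_exists_other {β : V} (hβ : β ∈ R.base) {γ : V} (hγ : γ ∈ R.posRoots)
    (hne : γ ≠ β) : ∃ β' ∈ R.base, β' ≠ β ∧ 0 < R.coord γ β' := by
  obtain ⟨hγΔ, hpos⟩ := Finset.mem_filter.mp hγ
  have hβΔ := R.base_sub hβ
  by_contra hcon
  push_neg at hcon
  have hz : ∀ β' ∈ R.base, β' ≠ β → R.coord γ β' = 0 :=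
    fun β' h1 h2 => le_antisymm (hcon β' h1 h2) (hpos β' h1)
  have hdec := R.root_decomp γ hγΔ
  rw [Finset.sum_eq_single β (fun b hb hbne => by rw [hz b hb hbne, zero_smul])
    (fun h => absurd hβ h)] at hdec
  set c := R.coord γ β with hc
  have hc0 : 0 ≤ c := hpos β hβ
  have hcne : c ≠ 0 := by
    intro h
    rw [h, zero_smul] at hdec
    exact R.root_ne_zero γ hγΔ hdec
  obtain ⟨k, hk⟩ := R.coord_int γ hγΔ β hβ
  rw [← hc] at hk
  have hk1 : 1 ≤ k := by
    have : (0:ℝ) < k := by rw [← hk]; exact lt_of_le_of_ne hc0 (Ne.symm hcne)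
    exact_mod_cast this
  rcases eq_or_lt_of_le hk1 with h1 | h2
  · apply hne
    rw [hdec, hk, ← h1]
    norm_num
  · -- k ≥ 2
    obtain ⟨m, hm⟩ := R.crystallographic γ hγΔ β hβΔ
    have hββ := aux_ipos R hβΔ
    have hγγ : ⟪γ, γ⟫ = c * c * ⟪β, β⟫ := by
      rw [hdec, real_inner_smul_left, real_inner_smul_right]; ring
    have hβγ : ⟪β, γ⟫ = c * ⟪β, β⟫ := by
      rw [hdec, real_inner_smul_right]
    have hm2 : (m:ℝ) * c = 2 := by
      rw [← hm, hβγ, hγγ]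
      field_simp
    have hmk : m * k = 2 := by
      have : (m:ℝ) * (k:ℝ) = 2 := by rw [← hk]; exact hm2
      exact_mod_cast this
    have hdvd : k ∣ 2 := Dvd.intro_left m hmk
    have hk2 : k ≤ 2 := Int.le_of_dvd (by norm_num) hdvd
    have hkeq : k = 2 := by omega
    have : γ = (2:ℝ) • β := by rw [hdec, hk, hkeq]; norm_num
    exact R.reduced β hβΔ (this ▸ hγΔ)

lemma aux_base_mem_pos {β : V} (hβ : β ∈ R.base) : β ∈ R.posRoots := by
  refine Finset.mem_filter.mpr ⟨R.base_sub hβ, fun β' hβ' => ?_⟩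
  rw [R.coord_base β' hβ' β hβ]
  split <;> norm_num

lemma aux_sum_pos_base {β : V} (hβ : β ∈ R.base) :
    ∑ γ ∈ R.posRoots, ⟪γ, β⟫ = ⟪β, β⟫ := by
  have hβΔ := R.base_sub hβ
  have hββ := aux_ipos R hβΔ
  rw [← Finset.add_sum_erase _ _ (aux_base_mem_pos R hβ)]
  have hzero : ∑ γ ∈ R.posRoots.erase β, ⟪γ, β⟫ = 0 := by
    apply Finset.sum_involution
      (g := fun γ _ => γ - (2 * ⟪γ, β⟫ / ⟪β, β⟫) • β)
    · intro a _
      rw [inner_sub_left, real_inner_smul_left]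
      field_simp
      ring
    · intro a _ hfa hga
      apply hfa
      have : (2 * ⟪a, β⟫ / ⟪β, β⟫) • β = 0 := by
        have := sub_eq_iff_eq_add.mp hga
        linear_combination (norm := module) -this
      rcases smul_eq_zero.mp this with h | h
      · rcases div_eq_zero_iff.mp h with h2 | h2
        · linarith
        · exact absurd h2 (ne_of_gt hββ)
      · exact absurd h (R.root_ne_zero β hβΔ)
    · intro a ha
      obtain ⟨hane, hapos⟩ := Finset.mem_erase.mp ha
      have haΔ := (Finset.mem_filter.mp hapos).1
      have hmem := R.reflect_mem β hβΔ a haΔ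
      obtain ⟨β', hβ', hβ'ne, hβ'pos⟩ := aux_exists_other R hβ hapos hane
      have hcoord : R.coord (a - (2 * ⟪a, β⟫ / ⟪β, β⟫) • β) β' = R.coord a β' := by
        rw [aux_coord_sub, R.coord_smul, R.coord_base β' hβ' β hβ,
          if_neg (fun h => hβ'ne h.symm)]
        ring
      refine Finset.mem_erase.mpr ⟨?_, aux_mem_pos R hmem hβ' (hcoord ▸ hβ'pos)⟩
      intro h
      have := hcoord ▸ hβ'pos
      rw [h, R.coord_base β' hβ' β hβ, if_neg (fun hh => hβ'ne hh.symm)] at this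
      exact lt_irrefl _ this
    · intro a _
      have : ⟪a - (2 * ⟪a, β⟫ / ⟪β, β⟫) • β, β⟫ = -⟪a, β⟫ := by
        rw [inner_sub_left, real_inner_smul_left]
        field_simp
        ring
      rw [this]
      have h2 : 2 * -⟪a, β⟫ / ⟪β, β⟫ = -(2 * ⟪a, β⟫ / ⟪β, β⟫) := by ring
      rw [h2, neg_smul, sub_neg_eq_add, sub_add_cancel]
  rw [hzero, add_zero]

lemma aux_two_rho {θ : V} (hθ : θ ∈ R.Δ) :
    ∑ γ ∈ R.posRoots, ⟪γ, θ⟫ = R.dualHt θ * ⟪θ, θ⟫ := by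
  have hθθ := aux_ipos R hθ
  have h1 : ∀ γ ∈ R.posRoots, ⟪γ, θ⟫ = ∑ β ∈ R.base, R.coord θ β * ⟪γ, β⟫ := by
    intro γ hγ
    rw [real_inner_comm, aux_inner_decomp R hθ γ]
    exact Finset.sum_congr rfl fun β _ => by rw [real_inner_comm]
  rw [Finset.sum_congr rfl h1, Finset.sum_comm]
  rw [RootSystemData.dualHt, Finset.sum_mul]
  apply Finset.sum_congr rfl
  intro β hβ
  rw [← Finset.mul_sum, aux_sum_pos_base R hβ]
  field_simp

end Aux2

section Aux3

variable {V : Type*} [NormedAddCommGroup V] [InnerProductSpace ℝ V]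
variable (R : RootSystemData V)

lemma aux_pos_inner_nonneg {θ : V} (hθ : θ ∈ R.Δ)
    (hθmax : ∀ γ ∈ R.Δ, ∀ β ∈ R.base, R.coord γ β ≤ R.coord θ β)
    {γ : V} (hγΔ : γ ∈ R.Δ)
    (hcoords : ∀ β ∈ R.base, 0 ≤ R.coord γ β) : 0 ≤ ⟪γ, θ⟫ := by
  rw [aux_inner_decomp R hγΔ θ]
  apply Finset.sum_nonneg
  intro β hβ
  refine mul_nonneg (hcoords β hβ) ?_
  rw [real_inner_comm]
  exact aux_dominant R hθ hθmax hβ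

lemma aux_inner_theta_le {θ : V} (hθ : θ ∈ R.Δ)
    (hθmax : ∀ γ ∈ R.Δ, ∀ β ∈ R.base, R.coord γ β ≤ R.coord θ β)
    {γ : V} (hγ : γ ∈ R.Δ) (hne : γ ≠ θ) : 2 * ⟪γ, θ⟫ ≤ ⟪θ, θ⟫ := by
  by_contra hlt
  push_neg at hlt
  have hθθ := aux_ipos R hθ
  have hγγ := aux_ipos R hγ
  have hθθ' : ⟪θ, θ⟫ ≠ 0 := ne_of_gt hθθ
  have hγγ' : ⟪γ, γ⟫ ≠ 0 := ne_of_gt hγγ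
  obtain ⟨p, hp⟩ := R.crystallographic θ hθ γ hγ
  obtain ⟨q, hq⟩ := R.crystallographic γ hγ θ hθ
  have hγθ : 0 < ⟪γ, θ⟫ := by linarith
  rw [div_eq_iff hθθ'] at hp
  rw [div_eq_iff hγγ'] at hq
  -- hp : 2 * ⟪γ,θ⟫ = p * ⟪θ,θ⟫ ; hq : 2 * ⟪θ,γ⟫ = q * ⟪γ,γ⟫
  have hcomm := real_inner_comm θ γ
  have hp2 : (2:ℝ) ≤ (p:ℝ) := by
    have h1 : (1:ℝ) < (p:ℝ) := by nlinarith
    have h2 : (1:ℤ) < p := by exact_mod_cast h1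
    exact_mod_cast h2
  have hq1 : (1:ℝ) ≤ (q:ℝ) := by
    have h1 : (0:ℝ) < (q:ℝ) := by nlinarith
    have h2 : (0:ℤ) < q := by exact_mod_cast h1
    exact_mod_cast h2
  have hcs := real_inner_mul_inner_self_le γ θ
  have hpq : (p:ℝ) * (q:ℝ) ≤ 4 := by nlinarith [mul_pos hθθ hγγ]
  have hq2 : (q:ℝ) ≤ 2 := by nlinarith
  have hqint : q = 1 ∨ q = 2 := by
    have a1 : (1:ℤ) ≤ q := by exact_mod_cast hq1
    have a2 : (q:ℤ) ≤ 2 := by exact_mod_cast hq2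
    omega
  rcases hqint with hq1e | hq2e
  · -- q = 1
    subst hq1e
    push_cast at hq
    -- hq : 2 * ⟪θ,γ⟫ = 1 * ⟪γ,γ⟫
    have hmem := R.reflect_mem γ hγ θ hθ
    have hco1 : 2 * ⟪θ, γ⟫ / ⟪γ, γ⟫ = 1 := by
      rw [div_eq_iff hγγ']; linarith
    rw [hco1, one_smul] at hmem
    -- hmem : θ - γ ∈ Δ
    have hδcoords : ∀ β ∈ R.base, 0 ≤ R.coord (θ - γ) β := by
      intro β hβ
      rw [aux_coord_sub]
      have := hθmax γ hγ β hβ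
      linarith
    have hδθnn : 0 ≤ ⟪θ - γ, θ⟫ := aux_pos_inner_nonneg R hθ hθmax hmem hδcoords
    have he1 : ⟪θ - γ, θ⟫ = ⟪θ, θ⟫ - ⟪γ, θ⟫ := by rw [inner_sub_left]
    have hγθge : ⟪θ, θ⟫ ≤ ⟪γ, θ⟫ := by nlinarith
    have hδθ0 : ⟪θ - γ, θ⟫ = 0 := by linarith
    have hγθT : ⟪γ, θ⟫ = ⟪θ, θ⟫ := by linarith
    have hγγ2T : ⟪γ, γ⟫ = 2 * ⟪θ, θ⟫ := by linarith
    have hγδ : ⟪γ, θ - γ⟫ = -⟪θ, θ⟫ := by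
      rw [inner_sub_right]; linarith [real_inner_comm γ θ]
    have hδδ : ⟪θ - γ, θ - γ⟫ = ⟪θ, θ⟫ := by
      rw [inner_sub_left, inner_sub_right, inner_sub_right]; linarith
    have hmem2 := R.reflect_mem (θ - γ) hmem γ hγ
    have hco2 : 2 * ⟪γ, θ - γ⟫ / ⟪θ - γ, θ - γ⟫ = -2 := by
      rw [hγδ, hδδ, div_eq_iff hθθ']; ring
    rw [hco2] at hmem2
    have heq : γ - (-2:ℝ) • (θ - γ) = θ + (θ - γ) := by module
    rw [heq] at hmem2
    have hfin : ∀ β ∈ R.base, R.coord (θ - γ) β = 0 := by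
      intro β hβ
      have ha := hθmax _ hmem2 β hβ
      rw [R.coord_add] at ha
      have hb := hδcoords β hβ
      linarith
    exact aux_coord_eq_zero R hmem hfin
  · -- q = 2
    subst hq2e
    push_cast at hq hpq
    have hple : (p:ℝ) ≤ 2 := by nlinarith
    have hpeq : (p:ℝ) = 2 := le_antisymm hple hp2
    rw [hpeq] at hp
    -- ⟪γ,θ⟫ = ⟪θ,θ⟫, ⟪θ,γ⟫ = ⟪γ,γ⟫
    have hz : ⟪γ - θ, γ - θ⟫ = 0 := by
      rw [inner_sub_left, inner_sub_right, inner_sub_right]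
      linarith
    exact hne (sub_eq_zero.mp (inner_self_eq_zero.mp hz))

end Aux3

section Aux4

variable {V : Type*} [NormedAddCommGroup V] [InnerProductSpace ℝ V]
variable (R : RootSystemData V)

lemma aux_level_sub_pos {α : V} (hα : α ∈ R.base) {i : ℤ} (hi : 1 ≤ i) :
    R.level α i ⊆ R.posRoots := by
  intro γ hγ
  obtain ⟨h1, h2⟩ := Finset.mem_filter.mp hγ
  apply aux_mem_pos R h1 hα
  rw [h2]
  have : (0:ℤ) < i := hi
  exact_mod_cast this

lemma aux_partition {α : V} (hα : α ∈ R.base) {θ : V} (hθ : θ ∈ R.Δ)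
    (hθmax : ∀ γ ∈ R.Δ, ∀ β ∈ R.base, R.coord γ β ≤ R.coord θ β)
    {d : ℕ} (hd : (d:ℝ) = R.coord θ α) (f : V → ℝ) :
    ∑ γ ∈ R.posRoots, f γ
      = (∑ γ ∈ R.posRoots.filter (fun γ => R.coord γ α = 0), f γ)
        + ∑ i ∈ Finset.Icc 1 d, ∑ γ ∈ R.level α (i:ℤ), f γ := by
  classical
  set gg : V → ℕ := fun γ => (⌊R.coord γ α⌋).toNat with hgg
  have hint : ∀ γ ∈ R.posRoots, ∃ k : ℤ, R.coord γ α = (k:ℝ) ∧ 0 ≤ k ∧ k ≤ d := by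
    intro γ hγ
    obtain ⟨hγΔ, hγp⟩ := Finset.mem_filter.mp hγ
    obtain ⟨k, hk⟩ := R.coord_int γ hγΔ α hα
    refine ⟨k, hk, ?_, ?_⟩
    · have := hγp α hα; rw [hk] at this; exact_mod_cast this
    · have := hθmax γ hγΔ α hα
      rw [hk, ← hd] at this
      exact_mod_cast this
  have hmaps : ∀ γ ∈ R.posRoots, gg γ ∈ Finset.range (d+1) := by
    intro γ hγ
    obtain ⟨k, hk, hk0, hkd⟩ := hint γ hγ
    simp only [hgg, hk, Int.floor_intCast, Finset.mem_range]
    omega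
  have hsum := Finset.sum_fiberwise_of_maps_to hmaps f
  rw [← hsum]
  have hrange : Finset.range (d+1) = insert 0 (Finset.Icc 1 d) := by
    ext x
    simp only [Finset.mem_range, Finset.mem_insert, Finset.mem_Icc]
    omega
  rw [hrange, Finset.sum_insert (by simp)]
  congr 1
  · -- fiber 0
    congr 1
    ext γ
    simp only [Finset.mem_filter]
    constructor
    · rintro ⟨hγp, hγ0⟩
      obtain ⟨k, hk, hk0, hkd⟩ := hint γ hγp
      refine ⟨hγp, ?_⟩
      simp only [hgg, hk, Int.floor_intCast] at hγ0
      have : k = 0 := by omega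
      rw [hk, this]; norm_num
    · rintro ⟨hγp, hγ0⟩
      refine ⟨hγp, ?_⟩
      simp only [hgg, hγ0]
      norm_num
  · -- fibers 1..d
    apply Finset.sum_congr rfl
    intro i hi
    obtain ⟨hi1, _⟩ := Finset.mem_Icc.mp hi
    congr 1
    ext γ
    simp only [Finset.mem_filter, RootSystemData.level]
    constructor
    · rintro ⟨hγp, hγi⟩
      obtain ⟨k, hk, hk0, hkd⟩ := hint γ hγp
      have hγΔ := (Finset.mem_filter.mp hγp).1
      simp only [hgg, hk, Int.floor_intCast] at hγi
      refine ⟨hγΔ, ?_⟩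
      rw [hk]
      have : k = (i:ℤ) := by omega
      rw [this]
    · rintro ⟨hγΔ, hγi⟩
      have hγl : γ ∈ R.level α (i:ℤ) := Finset.mem_filter.mpr ⟨hγΔ, hγi⟩
      refine ⟨aux_level_sub_pos R hα (by exact_mod_cast hi1) hγl, ?_⟩
      simp only [hgg, hγi, Int.floor_intCast]
      omega

end Aux4

section Aux5

variable {V : Type*} [NormedAddCommGroup V] [InnerProductSpace ℝ V]
variable (R : RootSystemData V)

lemma aux_half {θ : V} (hθ : θ ∈ R.Δ)
    (hθmax : ∀ γ ∈ R.Δ, ∀ β ∈ R.base, R.coord γ β ≤ R.coord θ β)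
    {γ : V} (hγ : γ ∈ R.Δ) (hne : γ ≠ θ) (hnn : 0 ≤ ⟪γ, θ⟫)
    (hnz : ⟪γ, θ⟫ ≠ 0) : 2 * ⟪γ, θ⟫ = ⟪θ, θ⟫ := by
  have hθθ := aux_ipos R hθ
  have hθθ' : ⟪θ, θ⟫ ≠ 0 := ne_of_gt hθθ
  obtain ⟨k, hk⟩ := R.crystallographic θ hθ γ hγ
  have hpos : 0 < ⟪γ, θ⟫ := lt_of_le_of_ne hnn (Ne.symm hnz)
  have hle := aux_inner_theta_le R hθ hθmax hγ hne
  have hk1 : (0:ℝ) < (k:ℝ) := by rw [← hk]; positivity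
  have hk2 : (k:ℝ) ≤ 1 := by
    rw [← hk, div_le_one hθθ]; linarith
  have : k = 1 := by
    have a1 : (0:ℤ) < k := by exact_mod_cast hk1
    have a2 : (k:ℤ) ≤ 1 := by exact_mod_cast hk2
    omega
  rw [this] at hk
  rw [div_eq_iff hθθ'] at hk
  push_cast at hk
  linarith

lemma aux_theta_sub_mem {θ : V} (hθ : θ ∈ R.Δ)
    {γ : V} (hγ : γ ∈ R.Δ) (h2 : 2 * ⟪γ, θ⟫ = ⟪θ, θ⟫) : θ - γ ∈ R.Δ := by
  have hθθ' : ⟪θ, θ⟫ ≠ 0 := ne_of_gt (aux_ipos R hθ)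
  have hmem := R.reflect_mem θ hθ γ hγ
  have hco : 2 * ⟪γ, θ⟫ / ⟪θ, θ⟫ = 1 := by rw [h2, div_self hθθ']
  rw [hco, one_smul] at hmem
  have := aux_neg_mem R hmem
  rwa [neg_sub] at this

lemma aux_pos_nonneg_theta {θ : V} (hθ : θ ∈ R.Δ)
    (hθmax : ∀ γ ∈ R.Δ, ∀ β ∈ R.base, R.coord γ β ≤ R.coord θ β)
    {γ : V} (hγ : γ ∈ R.posRoots) : 0 ≤ ⟪γ, θ⟫ := by
  obtain ⟨h1, h2⟩ := Finset.mem_filter.mp hγ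
  exact aux_pos_inner_nonneg R hθ hθmax h1 h2

lemma aux_level_d {α : V} (hα : α ∈ R.base) {θ : V} (hθ : θ ∈ R.Δ)
    (hθmax : ∀ γ ∈ R.Δ, ∀ β ∈ R.base, R.coord γ β ≤ R.coord θ β)
    {d : ℕ} (hd : (d:ℝ) = R.coord θ α) (hd1 : 1 ≤ d) :
    ∑ γ ∈ R.level α (d:ℤ), ⟪γ, θ⟫
      = ⟪θ, θ⟫ + ∑ γ ∈ R.posRoots.filter (fun γ => R.coord γ α = 0), ⟪γ, θ⟫ := by
  classical
  have hθθ := aux_ipos R hθ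
  have hθd : R.coord θ α = ((d:ℤ):ℝ) := by push_cast; linarith
  have hθlev : θ ∈ R.level α (d:ℤ) := Finset.mem_filter.mpr ⟨hθ, hθd⟩
  rw [← Finset.add_sum_erase _ _ hθlev]
  congr 1
  rw [← Finset.sum_filter_ne_zero ((R.level α (d:ℤ)).erase θ),
    ← Finset.sum_filter_ne_zero (R.posRoots.filter (fun γ => R.coord γ α = 0))]
  apply Finset.sum_nbij' (i := fun γ => θ - γ) (j := fun γ => θ - γ)
  · -- forward membership
    intro a ha
    obtain ⟨ha1, hanz⟩ := Finset.mem_filter.mp ha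
    obtain ⟨hane, halev⟩ := Finset.mem_erase.mp ha1
    obtain ⟨haΔ, hacoord⟩ := Finset.mem_filter.mp halev
    have hapos : a ∈ R.posRoots :=
      aux_level_sub_pos R hα (by exact_mod_cast hd1) halev
    have hnn := aux_pos_nonneg_theta R hθ hθmax hapos
    have h2 := aux_half R hθ hθmax haΔ hane hnn hanz
    have hsub := aux_theta_sub_mem R hθ haΔ h2
    refine Finset.mem_filter.mpr ⟨Finset.mem_filter.mpr ⟨?_, ?_⟩, ?_⟩
    · refine Finset.mem_filter.mpr ⟨hsub, fun β hβ => ?_⟩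
      rw [aux_coord_sub]
      have := hθmax a haΔ β hβ
      linarith
    · rw [aux_coord_sub, ← hd, hacoord]
      push_cast; ring
    · rw [inner_sub_left]
      intro h
      have : ⟪a, θ⟫ = ⟪θ, θ⟫ := by linarith
      linarith
  · -- backward membership
    intro a ha
    obtain ⟨ha1, hanz⟩ := Finset.mem_filter.mp ha
    obtain ⟨hapos, hacoord⟩ := Finset.mem_filter.mp ha1
    have haΔ := (Finset.mem_filter.mp hapos).1
    have hane : a ≠ θ := by
      intro h
      rw [h, ← hd] at hacoord
      have : (1:ℝ) ≤ (d:ℝ) := by exact_mod_cast hd1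
      linarith
    have hnn := aux_pos_nonneg_theta R hθ hθmax hapos
    have h2 := aux_half R hθ hθmax haΔ hane hnn hanz
    have hsub := aux_theta_sub_mem R hθ haΔ h2
    refine Finset.mem_filter.mpr ⟨Finset.mem_erase.mpr ⟨?_, ?_⟩, ?_⟩
    · intro h
      exact R.root_ne_zero a haΔ (by rwa [sub_eq_self] at h)
    · refine Finset.mem_filter.mpr ⟨hsub, ?_⟩
      rw [aux_coord_sub, ← hd, hacoord]
      push_cast; ring
    · rw [inner_sub_left]
      intro h
      have : ⟪a, θ⟫ = ⟪θ, θ⟫ := by linarith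
      linarith
  · intro a _; exact sub_sub_cancel θ a
  · intro a _; exact sub_sub_cancel θ a
  · -- values
    intro a ha
    obtain ⟨ha1, hanz⟩ := Finset.mem_filter.mp ha
    obtain ⟨hane, halev⟩ := Finset.mem_erase.mp ha1
    obtain ⟨haΔ, hacoord⟩ := Finset.mem_filter.mp halev
    have hapos : a ∈ R.posRoots :=
      aux_level_sub_pos R hα (by exact_mod_cast hd1) halev
    have hnn := aux_pos_nonneg_theta R hθ hθmax hapos
    have h2 := aux_half R hθ hθmax haΔ hane hnn hanz
    rw [inner_sub_left]
    linarith

end Aux5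

section Aux6

variable {V : Type*} [NormedAddCommGroup V] [InnerProductSpace ℝ V]
variable (R : RootSystemData V)

lemma aux_level_theta {α : V} (hα : α ∈ R.base) {θ : V} (hθ : θ ∈ R.Δ)
    (qfun : ℕ → ℝ)
    (hqfun : ∀ i : ℕ, (∑ γ ∈ R.level α (i : ℤ), γ) = qfun i • R.fw α)
    (i : ℕ) :
    ∑ γ ∈ R.level α (i:ℤ), ⟪γ, θ⟫ = qfun i * (R.coord θ α * (⟪α, α⟫ / 2)) := by
  have h2 : ⟪(∑ γ ∈ R.level α (i:ℤ), γ), θ⟫ = ⟪qfun i • R.fw α, θ⟫ := by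
    rw [hqfun i]
  rw [sum_inner, real_inner_smul_left] at h2
  rw [h2, real_inner_comm θ (R.fw α), aux_fw_inner R hα hθ]

lemma aux_q_int {α : V} (hα : α ∈ R.base) (qfun : ℕ → ℝ)
    (hqfun : ∀ i : ℕ, (∑ γ ∈ R.level α (i : ℤ), γ) = qfun i • R.fw α)
    (i : ℕ) : ∃ k : ℤ, qfun i = (k:ℝ) := by
  classical
  have hαΔ := R.base_sub hα
  have hαα := aux_ipos R hαΔ
  have hcne : (⟪α, α⟫ / 2 : ℝ) ≠ 0 := by positivity
  have h2 : ∑ γ ∈ R.level α (i:ℤ), ⟪γ, α⟫ = qfun i * (⟪α, α⟫ / 2) := by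
    have h3 : ⟪(∑ γ ∈ R.level α (i:ℤ), γ), α⟫ = ⟪qfun i • R.fw α, α⟫ := by
      rw [hqfun i]
    rw [sum_inner, real_inner_smul_left, R.fw_spec α hα α hα, if_pos rfl] at h3
    exact h3
  set kk : V → ℤ := fun γ =>
    if h : γ ∈ R.Δ then Classical.choose (R.crystallographic α hαΔ γ h) else 0
    with hkk
  have hterm : ∀ γ ∈ R.level α (i:ℤ), ⟪γ, α⟫ = (kk γ : ℝ) * (⟪α, α⟫ / 2) := by
    intro γ hγ
    have hγΔ := (Finset.mem_filter.mp hγ).1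
    have hspec := Classical.choose_spec (R.crystallographic α hαΔ γ hγΔ)
    rw [hkk]
    simp only [dif_pos hγΔ]
    rw [div_eq_iff (ne_of_gt hαα)] at hspec
    linarith
  refine ⟨∑ γ ∈ R.level α (i:ℤ), kk γ, ?_⟩
  have h4 : ∑ γ ∈ R.level α (i:ℤ), ⟪γ, α⟫
      = ((∑ γ ∈ R.level α (i:ℤ), kk γ : ℤ) : ℝ) * (⟪α, α⟫ / 2) := by
    rw [Finset.sum_congr rfl hterm, ← Finset.sum_mul]
    push_cast
    ring
  rw [h2] at h4
  exact mul_right_cancel₀ hcne h4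

end Aux6

/-- For the `(ℤ,α)`-grading of height `d = d_α`, with
`|Δ_α(i)| = q_α(i) • ϖ_α` and `q_α = Σ_{i=1}^{d} q_α(i)`, one has
`d (q_α + q_α(d)) = 2 h* r_α`, where `r_α = (θ,θ)/(α,α)` and `h*` is the dual Coxeter
number; in particular `2 h* r_α / d` is a natural number. -/
theorem height_mul_q_add_qd_eq
    {V : Type*} [NormedAddCommGroup V] [InnerProductSpace ℝ V]
    (R : RootSystemData V) (α : V) (hα : α ∈ R.base)
    (θ : V) (hθ : θ ∈ R.Δ)
    (hθmax : ∀ γ ∈ R.Δ, ∀ β ∈ R.base, R.coord γ β ≤ R.coord θ β)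
    (d : ℕ) (hd : (d : ℝ) = R.coord θ α)
    (qfun : ℕ → ℝ)
    (hqfun : ∀ i : ℕ, (∑ γ ∈ R.level α (i : ℤ), γ) = qfun i • R.fw α) :
    (d : ℝ) * ((∑ i ∈ Finset.Icc 1 d, qfun i) + qfun d)
      = 2 * (R.dualHt θ + 1) * (⟪θ, θ⟫ / ⟪α, α⟫) ∧
    ∃ m : ℕ, 2 * (R.dualHt θ + 1) * (⟪θ, θ⟫ / ⟪α, α⟫) = (d : ℝ) * (m : ℝ) := by
  have hαΔ := R.base_sub hα
  have hαα := aux_ipos R hαΔ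
  have hθθ := aux_ipos R hθ
  have hααne : ⟪α, α⟫ ≠ 0 := ne_of_gt hαα
  have hd1 : 1 ≤ d := by
    have h1 := hθmax α hαΔ α hα
    rw [R.coord_base α hα α hα, if_pos rfl, ← hd] at h1
    exact_mod_cast h1
  have hD : (1:ℝ) ≤ (d:ℝ) := by exact_mod_cast hd1
  have hdc : (0:ℝ) < (d:ℝ) * (⟪α, α⟫ / 2) := by
    apply mul_pos (by linarith) (by linarith)
  have hpair := aux_level_theta R hα hθ qfun hqfun
  have hpart := aux_partition R hα hθ hθmax hd (fun γ => ⟪γ, θ⟫)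
  rw [aux_two_rho R hθ] at hpart
  have hlevels : ∀ i ∈ Finset.Icc 1 d,
      ∑ γ ∈ R.level α (i:ℤ), ⟪γ, θ⟫ = qfun i * ((d:ℝ) * (⟪α, α⟫ / 2)) := by
    intro i _
    rw [hpair i, ← hd]
  rw [Finset.sum_congr rfl hlevels, ← Finset.sum_mul] at hpart
  have hlvld := aux_level_d R hα hθ hθmax hd hd1
  rw [hpair d, ← hd] at hlvld
  -- hpart : dualHt θ * ⟪θ,θ⟫ = S0 + (Σ qfun) * (d * c)
  -- hlvld : qfun d * (d * c) = ⟪θ,θ⟫ + S0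
  have hkey : ((∑ i ∈ Finset.Icc 1 d, qfun i) + qfun d) * ((d:ℝ) * (⟪α, α⟫ / 2))
      = (R.dualHt θ + 1) * ⟪θ, θ⟫ := by
    have hexp : ((∑ i ∈ Finset.Icc 1 d, qfun i) + qfun d) * ((d:ℝ) * (⟪α, α⟫ / 2))
        = (∑ i ∈ Finset.Icc 1 d, qfun i) * ((d:ℝ) * (⟪α, α⟫ / 2))
          + qfun d * ((d:ℝ) * (⟪α, α⟫ / 2)) := by ring
    rw [hexp, hlvld]
    linarith
  have hgoal1 : (d : ℝ) * ((∑ i ∈ Finset.Icc 1 d, qfun i) + qfun d)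
      = 2 * (R.dualHt θ + 1) * (⟪θ, θ⟫ / ⟪α, α⟫) := by
    field_simp
    linear_combination 2 * hkey
  refine ⟨hgoal1, ?_⟩
  -- integrality and nonnegativity
  have hqnn : ∀ i ∈ Finset.Icc 1 d, 0 ≤ qfun i := by
    intro i hi
    obtain ⟨hi1, _⟩ := Finset.mem_Icc.mp hi
    have hsum : 0 ≤ ∑ γ ∈ R.level α (i:ℤ), ⟪γ, θ⟫ := by
      apply Finset.sum_nonneg
      intro γ hγ
      exact aux_pos_nonneg_theta R hθ hθmax
        (aux_level_sub_pos R hα (by exact_mod_cast hi1) hγ)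
    rw [hpair i, ← hd] at hsum
    have heq : qfun i = (qfun i * ((d:ℝ) * (⟪α, α⟫ / 2))) / ((d:ℝ) * (⟪α, α⟫ / 2)) := by
      field_simp
    rw [heq]
    exact div_nonneg hsum (le_of_lt hdc)
  choose kf hkf using aux_q_int R hα qfun hqfun
  set K : ℤ := (∑ i ∈ Finset.Icc 1 d, kf i) + kf d with hK
  have hKval : ((∑ i ∈ Finset.Icc 1 d, qfun i) + qfun d) = (K:ℝ) := by
    rw [hK]
    push_cast
    rw [Finset.sum_congr rfl (fun i _ => hkf i), hkf d]
  have hKnn : (0:ℝ) ≤ (K:ℝ) := by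
    rw [← hKval]
    have h1 : 0 ≤ ∑ i ∈ Finset.Icc 1 d, qfun i := Finset.sum_nonneg hqnn
    have h2 : 0 ≤ qfun d := hqnn d (Finset.mem_Icc.mpr ⟨hd1, le_refl d⟩)
    linarith
  have hKnn' : 0 ≤ K := by exact_mod_cast hKnn
  refine ⟨K.toNat, ?_⟩
  have h5 : ((K.toNat : ℕ) : ℤ) = K := Int.toNat_of_nonneg hKnn'
  have h6 : ((K.toNat : ℕ) : ℝ) = (K : ℝ) := by exact_mod_cast congrArg (fun z : ℤ => (z:ℝ)) h5
  rw [← hgoal1, hKval, h6]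
end

section
/- Let Δ be an irreducible root system, α a simple root with d = d_α = ht_α(θ) ≥ 2, and q_α(i) defined by |Δ_α(i)| = q_α(i) ϖ_α. Then q_α(i) = q_α(d − i) for all 1 ≤ i ≤ d − 1. -/
open scoped RealInnerProductSpace
open scoped Classical

section Aux

variable {V : Type*} [NormedAddCommGroup V] [InnerProductSpace ℝ V]

lemma RSD_coord_sub (R : RootSystemData V) (α x y : V) :
    R.coord (x - y) α = R.coord x α - R.coord y α := by
  have h := R.coord_add α (x - y) y
  rw [sub_add_cancel] at h
  linarith

lemma RSD_inner_self_pos (R : RootSystemData V) {γ : V} (hγ : γ ∈ R.Δ) :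
    0 < ⟪γ, γ⟫ := by
  have h := R.root_ne_zero γ hγ
  have h2 : ⟪γ, γ⟫ ≠ 0 := inner_self_ne_zero.2 h
  exact lt_of_le_of_ne real_inner_self_nonneg (Ne.symm h2)

lemma RSD_neg_mem (R : RootSystemData V) {γ : V} (hγ : γ ∈ R.Δ) : -γ ∈ R.Δ := by
  have h := R.reflect_mem γ hγ γ hγ
  have hne : ⟪γ, γ⟫ ≠ 0 := (RSD_inner_self_pos R hγ).ne'
  rw [mul_div_assoc, div_self hne, mul_one, two_smul] at h
  have : γ - (γ + γ) = -γ := by abel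
  rwa [this] at h

lemma RSD_inner_fw (R : RootSystemData V) {α : V} (hα : α ∈ R.base) {γ : V}
    (hγ : γ ∈ R.Δ) : ⟪R.fw α, γ⟫ = R.coord γ α * (⟪α, α⟫ / 2) := by
  conv_lhs => rw [R.root_decomp γ hγ]
  rw [inner_sum]
  have : ∀ β ∈ R.base, ⟪R.fw α, R.coord γ β • β⟫
      = if β = α then R.coord γ β * (⟪α, α⟫ / 2) else 0 := by
    intro β hβ
    rw [real_inner_smul_right, R.fw_spec α hα β hβ]
    split <;> simp
  rw [Finset.sum_congr rfl this, Finset.sum_ite_eq' R.base α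
    (fun β => R.coord γ β * (⟪α, α⟫ / 2)), if_pos hα]

/-- Key lemma: for a root `γ` with `0 < ht_α γ < d`, the pairing with the highest
root `θ` is nonnegative, and if positive it equals `⟪θ,θ⟫/2` with `θ - γ` a root. -/
lemma RSD_key (R : RootSystemData V) {α θ : V} (hα : α ∈ R.base) (hθ : θ ∈ R.Δ)
    (hθmax : ∀ γ ∈ R.Δ, ∀ β ∈ R.base, R.coord γ β ≤ R.coord θ β)
    {γ : V} (hγ : γ ∈ R.Δ) (h1 : 0 < R.coord γ α) (h2 : R.coord γ α < R.coord θ α) :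
    0 ≤ ⟪γ, θ⟫ ∧ (0 < ⟪γ, θ⟫ → ⟪γ, θ⟫ = ⟪θ, θ⟫ / 2 ∧ θ - γ ∈ R.Δ) := by
  have hγγ : 0 < ⟪γ, γ⟫ := RSD_inner_self_pos R hγ
  have hθθ : 0 < ⟪θ, θ⟫ := RSD_inner_self_pos R hθ
  have hnonneg : 0 ≤ ⟪γ, θ⟫ := by
    by_contra hneg
    push_neg at hneg
    obtain ⟨k, hk⟩ := R.crystallographic γ hγ θ hθ
    have hk0 : (k : ℝ) < 0 := by
      rw [← hk]
      have : ⟪θ, γ⟫ < 0 := by rwa [real_inner_comm]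
      exact div_neg_of_neg_of_pos (by linarith) hγγ
    have hk1 : (k : ℝ) ≤ -1 := by
      have : k < 0 := by exact_mod_cast hk0
      have : k ≤ -1 := by omega
      exact_mod_cast this
    have hmem := R.reflect_mem γ hγ θ hθ
    rw [hk] at hmem
    have hc := hθmax _ hmem α hα
    rw [RSD_coord_sub, R.coord_smul] at hc
    nlinarith
  refine ⟨hnonneg, fun hpos => ?_⟩
  obtain ⟨k, hk⟩ := R.crystallographic θ hθ γ hγ
  have hk0 : 0 < (k : ℝ) := by
    rw [← hk]; exact div_pos (by linarith) hθθ
  have hk1 : (1 : ℝ) ≤ (k : ℝ) := by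
    have : 0 < k := by exact_mod_cast hk0
    have : 1 ≤ k := by omega
    exact_mod_cast this
  have hmem := R.reflect_mem θ hθ γ hγ
  rw [hk] at hmem
  have hklt : (k : ℝ) < 2 := by
    by_contra hge
    push_neg at hge
    have hmem2 := RSD_neg_mem R hmem
    have hc := hθmax _ hmem2 α hα
    have : R.coord (-(γ - (k : ℝ) • θ)) α = -(R.coord γ α - (k : ℝ) * R.coord θ α) := by
      have h0 := RSD_coord_sub R α 0 (γ - (k : ℝ) • θ)
      have h00 : R.coord (0 : V) α = 0 := by
        have := RSD_coord_sub R α γ γ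
        simpa using this
      rw [zero_sub] at h0
      rw [h0, h00, RSD_coord_sub, R.coord_smul]
      ring
    rw [this] at hc
    have hdpos : 0 < R.coord θ α := lt_trans h1 h2
    nlinarith
  have hkeq : (k : ℝ) = 1 := by
    have : k = 1 := by
      have h1' : 1 ≤ k := by exact_mod_cast hk1
      have h2' : k < 2 := by exact_mod_cast hklt
      omega
    exact_mod_cast this
  rw [hkeq] at hk hmem
  constructor
  · field_simp at hk
    linarith
  · rw [one_smul] at hmem
    have := RSD_neg_mem R hmem
    rwa [neg_sub] at this

end Aux

/-- For a simple root `α` with `d = d_α = ht_α(θ) ≥ 2` and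
`|Δ_α(i)| = q_α(i) • ϖ_α`, one has `q_α(i) = q_α(d − i)` for all `1 ≤ i ≤ d − 1`. -/
theorem qfun_symmetry
    {V : Type*} [NormedAddCommGroup V] [InnerProductSpace ℝ V]
    (R : RootSystemData V) (α : V) (hα : α ∈ R.base)
    (θ : V) (hθ : θ ∈ R.Δ)
    (hθmax : ∀ γ ∈ R.Δ, ∀ β ∈ R.base, R.coord γ β ≤ R.coord θ β)
    (d : ℕ) (hd : (d : ℝ) = R.coord θ α) (hd2 : 2 ≤ d)
    (qfun : ℕ → ℝ)
    (hqfun : ∀ i : ℕ, (∑ γ ∈ R.level α (i : ℤ), γ) = qfun i • R.fw α) :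
    ∀ i : ℕ, 1 ≤ i → i ≤ d - 1 → qfun i = qfun (d - i) := by
  intro i hi1 hi2
  have hαΔ : α ∈ R.Δ := R.base_sub hα
  have hαα : 0 < ⟪α, α⟫ := RSD_inner_self_pos R hαΔ
  have hθθ : 0 < ⟪θ, θ⟫ := RSD_inner_self_pos R hθ
  have hid : i < d := by omega
  -- the set of roots of level j pairing positively with θ
  set P : ℕ → Finset V := fun j => (R.level α (j : ℤ)).filter fun γ => 0 < ⟪γ, θ⟫ with hP
  -- data about membership in levels
  have hlev : ∀ j : ℕ, 1 ≤ j → j < d → ∀ γ ∈ R.level α (j : ℤ),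
      γ ∈ R.Δ ∧ 0 < R.coord γ α ∧ R.coord γ α < R.coord θ α := by
    intro j hj1 hjd γ hγ
    rw [RootSystemData.level, Finset.mem_filter] at hγ
    obtain ⟨hγΔ, hco⟩ := hγ
    refine ⟨hγΔ, ?_, ?_⟩
    · rw [hco]; push_cast; exact_mod_cast hj1
    · rw [hco, ← hd]; push_cast; exact_mod_cast hjd
  -- bijection between P i and P (d - i)
  have hbij : ∀ j : ℕ, 1 ≤ j → j < d → ∀ γ ∈ P j, θ - γ ∈ P (d - j) := by
    intro j hj1 hjd γ hγ
    rw [hP, Finset.mem_filter] at hγ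
    obtain ⟨hγlev, hγpos⟩ := hγ
    obtain ⟨hγΔ, hc1, hc2⟩ := hlev j hj1 hjd γ hγlev
    obtain ⟨_, hkey⟩ := RSD_key R hα hθ hθmax hγΔ hc1 hc2
    obtain ⟨hval, hmem⟩ := hkey hγpos
    rw [hP, Finset.mem_filter, RootSystemData.level, Finset.mem_filter]
    refine ⟨⟨hmem, ?_⟩, ?_⟩
    · rw [RSD_coord_sub, ← hd]
      rw [RootSystemData.level, Finset.mem_filter] at hγlev
      rw [hγlev.2]
      push_cast [Nat.cast_sub (le_of_lt hjd)]
      ring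
    · rw [inner_sub_left, hval]
      linarith
  have hcard : (P i).card = (P (d - i)).card := by
    apply Finset.card_bij (fun γ _ => θ - γ)
    · intro γ hγ; exact hbij i hi1 hid γ hγ
    · intro γ₁ h₁ γ₂ h₂ heq
      exact sub_right_injective heq
    · intro δ hδ
      refine ⟨θ - δ, ?_, by abel⟩
      have h1' : 1 ≤ d - i := by omega
      have h2' : d - i < d := by omega
      have := hbij (d - i) h1' h2' δ hδ
      have hdd : d - (d - i) = i := by omega
      rwa [hdd] at this
  -- the sum of pairings over a level
  have hsum : ∀ j : ℕ, 1 ≤ j → j < d →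
      (∑ γ ∈ R.level α (j : ℤ), ⟪γ, θ⟫) = (P j).card * (⟪θ, θ⟫ / 2) := by
    intro j hj1 hjd
    rw [← Finset.sum_filter_add_sum_filter_not (R.level α (j : ℤ)) (fun γ => 0 < ⟪γ, θ⟫)]
    have hzero : (∑ γ ∈ (R.level α (j : ℤ)).filter (fun γ => ¬ 0 < ⟪γ, θ⟫), ⟪γ, θ⟫) = 0 := by
      apply Finset.sum_eq_zero
      intro γ hγ
      rw [Finset.mem_filter] at hγ
      obtain ⟨hγΔ, hc1, hc2⟩ := hlev j hj1 hjd γ hγ.1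
      have := (RSD_key R hα hθ hθmax hγΔ hc1 hc2).1
      have := hγ.2
      linarith
    have hhalf : (∑ γ ∈ P j, ⟪γ, θ⟫) = (P j).card * (⟪θ, θ⟫ / 2) := by
      rw [Finset.sum_congr rfl (fun γ hγ => ?_), Finset.sum_const, nsmul_eq_mul]
      rw [hP, Finset.mem_filter] at hγ
      obtain ⟨hγΔ, hc1, hc2⟩ := hlev j hj1 hjd γ hγ.1
      exact ((RSD_key R hα hθ hθmax hγΔ hc1 hc2).2 hγ.2).1
    rw [hzero, add_zero]
    exact hhalf
  -- identify qfun j from the sum equation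
  have hq : ∀ j : ℕ, 1 ≤ j → j < d →
      qfun j * ((d : ℝ) * (⟪α, α⟫ / 2)) = (P j).card * (⟪θ, θ⟫ / 2) := by
    intro j hj1 hjd
    have h := hqfun j
    have h2 : ⟪∑ γ ∈ R.level α (j : ℤ), γ, θ⟫ = ⟪qfun j • R.fw α, θ⟫ := by rw [h]
    rw [sum_inner, real_inner_smul_left, RSD_inner_fw R hα hθ, ← hd] at h2
    rw [hsum j hj1 hjd] at h2
    linarith [h2]
  have e1 := hq i hi1 hid
  have e2 := hq (d - i) (by omega) (by omega)
  rw [← hcard] at e2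
  have hC : (0 : ℝ) < (d : ℝ) * (⟪α, α⟫ / 2) := by
    have : (0 : ℝ) < (d : ℝ) := by exact_mod_cast (by omega : 0 < d)
    positivity
  have := e1.trans e2.symm
  exact mul_right_cancel₀ hC.ne' this
end
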